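/- arXiv:2503.07246 — 5 statements merged into one kernel-verified Lean document; each statement's English description precedes it below -/
import Mathlib

section
/- Let 𝔾 = (V, E) be a finite simple undirected connected graph, let k ≥ 2 be an integer, and let j ∈ V with N_j^k nonempty. Let G_j be the subgraph of 𝔾 induced on the vertex set N_j^k. Then every connected component of G_j contains at least one vertex i whose graph distance from j is exactly 2; equivalently, every connected component of G_j contains a vertex i with |N_i ∩ N_j| > 0. -/
/-! Walking one step along a shortest path to `j` lowers the distance to `j` by exactly one, so
from any vertex of the annulus `a ≤ dist · j ≤ b` such steps stay inside the annulus until they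
reach its inner boundary `dist · j = a`. For `a = 2`, a vertex on the inner boundary has a common
neighbour with `j`. -/

/-- The `k`-hop neighborhood of a vertex `j`: vertices at graph distance at least `2`
and at most `k` from `j`. -/
def khop {V : Type*} (G : SimpleGraph V) (k : ℕ) (j : V) : Set V :=
  {v | 2 ≤ G.dist v j ∧ G.dist v j ≤ k}

namespace SimpleGraph

variable {V : Type*} {G : SimpleGraph V}

lemma exists_adj_dist_eq_sub_one {u v : V} (h : G.dist u v ≠ 0) :
    ∃ w, G.Adj u w ∧ G.dist w v = G.dist u v - 1 := by
  obtain ⟨p, hp⟩ := exists_walk_of_dist_ne_zero h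
  obtain ⟨w, hadj, q, rfl⟩ :=
    Walk.exists_eq_cons_of_ne (dist_ne_zero_iff_ne_and_reachable.mp h).1 p
  have hwv : G.dist w v ≤ q.length := dist_le q
  have huv : G.dist u v ≤ G.dist u w + G.dist w v := hadj.reachable.dist_triangle_left v
  rw [dist_eq_one_iff_adj.mpr hadj] at huv
  rw [Walk.length_cons] at hp
  exact ⟨w, hadj, by omega⟩

lemma exists_induce_reachable_dist_eq (a b : ℕ) (j : V)
    (v : {v | a ≤ G.dist v j ∧ G.dist v j ≤ b}) :
    ∃ i : {v | a ≤ G.dist v j ∧ G.dist v j ≤ b},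
      (G.induce {v | a ≤ G.dist v j ∧ G.dist v j ≤ b}).Reachable i v ∧ G.dist (i : V) j = a := by
  obtain ⟨v, hva, hvb⟩ := v
  induction hn : G.dist v j - a generalizing v with
  | zero => exact ⟨⟨v, hva, hvb⟩, .rfl, le_antisymm (Nat.sub_eq_zero_iff_le.mp hn) hva⟩
  | succ n ih =>
    obtain ⟨w, hadj, hw⟩ := exists_adj_dist_eq_sub_one (G := G) (by omega : G.dist v j ≠ 0)
    obtain ⟨i, hi, hia⟩ := ih w (by omega) (by omega) (by omega)
    exact ⟨i, hi.trans (induce_adj.mpr hadj.symm).reachable, hia⟩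

lemma commonNeighbors_nonempty_of_dist_eq_two {u v : V} (h : G.dist u v = 2) :
    (G.commonNeighbors u v).Nonempty := by
  have hreach : G.Reachable u v := Reachable.of_dist_ne_zero (by omega)
  have hedist : G.edist u v = 2 := by rw [← hreach.coe_dist_eq_edist, h]; rfl
  exact (edist_eq_two_iff.mp hedist).2.2

end SimpleGraph

theorem stmt1_general {V : Type*} (G : SimpleGraph V)
    (k : ℕ) (j : V) :
    ∀ c : (G.induce (khop G k j)).ConnectedComponent,
      ∃ i : khop G k j, (G.induce (khop G k j)).connectedComponentMk i = c ∧
        G.dist (i : V) j = 2 ∧ (G.neighborSet (i : V) ∩ G.neighborSet j).Nonempty := by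
  intro c
  obtain ⟨v, rfl⟩ := c.exists_rep
  obtain ⟨i, hreach, hi⟩ := SimpleGraph.exists_induce_reachable_dist_eq 2 k j v
  exact ⟨i, SimpleGraph.ConnectedComponent.sound hreach, hi,
    SimpleGraph.commonNeighbors_nonempty_of_dist_eq_two hi⟩

/-- Every connected component of the subgraph induced on the `k`-hop neighborhood of `j`
contains a vertex at graph distance exactly `2` from `j`, equivalently a vertex having a
common neighbor with `j`. -/
theorem stmt1 {V : Type*} [Fintype V] (G : SimpleGraph V) (hG : G.Connected)
    (k : ℕ) (hk : 2 ≤ k) (j : V) (hne : (khop G k j).Nonempty) :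
    ∀ c : (G.induce (khop G k j)).ConnectedComponent,
      ∃ i : khop G k j, (G.induce (khop G k j)).connectedComponentMk i = c ∧
        G.dist (i : V) j = 2 ∧ (G.neighborSet (i : V) ∩ G.neighborSet j).Nonempty :=
  stmt1_general G k j
end

section
/- Let 𝔾 = (V, E) be a finite simple undirected connected graph, let k ≥ 2 be an integer, and let j ∈ V. Then every connected component of the induced subgraph G_j = (N_j^k, E_j) that contains at least two vertices contains at least one vertex i for which both |N_i ∩ N_j^k| > 0 and |N_i ∩ N_j| > 0 hold. -/
/-- Every connected component with at least two vertices of the subgraph induced on the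
`k`-hop neighborhood of `j` contains a vertex `i` that has a neighbor inside the `k`-hop
neighborhood of `j` and also a common neighbor with `j`. -/
theorem stmt2 {V : Type*} [Fintype V] (G : SimpleGraph V) (hG : G.Connected)
    (k : ℕ) (hk : 2 ≤ k) (j : V)
    (c : (G.induce (khop G k j)).ConnectedComponent)
    (h2 : ∃ a b : khop G k j, a ≠ b ∧
      (G.induce (khop G k j)).connectedComponentMk a = c ∧
      (G.induce (khop G k j)).connectedComponentMk b = c) :
    ∃ i : khop G k j, (G.induce (khop G k j)).connectedComponentMk i = c ∧
      (G.neighborSet (i : V) ∩ khop G k j).Nonempty ∧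
      (G.neighborSet (i : V) ∩ G.neighborSet j).Nonempty := by
  obtain ⟨a, b, hab, ha, hb⟩ := h2
  -- pick a vertex of the component minimizing distance to j
  have hDne : {n | ∃ v : khop G k j,
      (G.induce (khop G k j)).connectedComponentMk v = c ∧ G.dist ↑v j = n}.Nonempty :=
    ⟨G.dist ↑a j, a, ha, rfl⟩
  obtain ⟨i, hic, hid⟩ := Nat.sInf_mem hDne
  have hmin : ∀ v : khop G k j,
      (G.induce (khop G k j)).connectedComponentMk v = c → G.dist ↑i j ≤ G.dist ↑v j := by
    intro v hv
    rw [hid]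
    exact Nat.sInf_le ⟨v, hv, rfl⟩
  have hi2 : 2 ≤ G.dist ↑i j := i.2.1
  -- dist i j = 2
  have hdist2 : G.dist ↑i j = 2 := by
    by_contra hne
    have h3 : 3 ≤ G.dist ↑i j := by omega
    obtain ⟨p, hp⟩ := hG.exists_walk_length_eq_dist ↑i j
    have hpn : ¬ p.Nil := by
      rw [SimpleGraph.Walk.nil_iff_length_eq]
      omega
    obtain ⟨v, h, q, rfl⟩ := (SimpleGraph.Walk.not_nil_iff).mp hpn
    have hqlen : q.length = G.dist ↑i j - 1 := by
      simp only [SimpleGraph.Walk.length_cons] at hp; omega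
    have hvle : G.dist v j ≤ G.dist ↑i j - 1 := hqlen ▸ G.dist_le q
    have hvge : G.dist ↑i j ≤ 1 + G.dist v j := by
      obtain ⟨w, hw⟩ := hG.exists_walk_length_eq_dist v j
      calc G.dist ↑i j ≤ (SimpleGraph.Walk.cons h w).length := G.dist_le _
        _ = 1 + G.dist v j := by rw [SimpleGraph.Walk.length_cons, hw]; omega
    have hvk : v ∈ khop G k j := ⟨by omega, by have := i.2.2; omega⟩
    have hadj : (G.induce (khop G k j)).Adj i ⟨v, hvk⟩ := h
    have hcomp : (G.induce (khop G k j)).connectedComponentMk ⟨v, hvk⟩ = c := by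
      rw [← hic]
      exact (SimpleGraph.ConnectedComponent.eq).mpr hadj.symm.reachable
    have := hmin ⟨v, hvk⟩ hcomp
    simp only at this
    omega
  -- common neighbor with j
  have hcn : (G.neighborSet (↑i : V) ∩ G.neighborSet j).Nonempty := by
    obtain ⟨p, hp⟩ := hG.exists_walk_length_eq_dist ↑i j
    rw [hdist2] at hp
    have hpn : ¬ p.Nil := by rw [SimpleGraph.Walk.nil_iff_length_eq]; omega
    obtain ⟨w, h, q, rfl⟩ := (SimpleGraph.Walk.not_nil_iff).mp hpn
    have hqn : ¬ q.Nil := by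
      rw [SimpleGraph.Walk.nil_iff_length_eq]
      simp only [SimpleGraph.Walk.length_cons] at hp
      omega
    obtain ⟨x, h', q', rfl⟩ := (SimpleGraph.Walk.not_nil_iff).mp hqn
    have hq'len : q'.length = 0 := by
      simp only [SimpleGraph.Walk.length_cons] at hp; omega
    have hx : x = j := SimpleGraph.Walk.eq_of_length_eq_zero hq'len
    subst hx
    exact ⟨w, h, h'.symm⟩
  -- neighbor inside khop
  have hnk : (G.neighborSet (↑i : V) ∩ khop G k j).Nonempty := by
    have hor : i ≠ a ∨ i ≠ b := by
      by_contra hcon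
      push_neg at hcon
      exact hab (hcon.1 ▸ hcon.2 ▸ rfl)
    have key : ∀ b' : khop G k j, i ≠ b' →
        (G.induce (khop G k j)).connectedComponentMk b' = c →
        (G.neighborSet (↑i : V) ∩ khop G k j).Nonempty := by
      intro b' hne hb'
      have hr : (G.induce (khop G k j)).Reachable i b' :=
        (SimpleGraph.ConnectedComponent.eq).mp (hic.trans hb'.symm)
      obtain ⟨p⟩ := hr
      have hpn : ¬ p.Nil := by
        intro hn
        exact hne (SimpleGraph.Walk.Nil.eq hn)
      obtain ⟨u, h, q, rfl⟩ := (SimpleGraph.Walk.not_nil_iff).mp hpn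
      exact ⟨↑u, h, u.2⟩
    obtain hne | hne := hor
    · exact key a hne ha
    · exact key b hne hb
  exact ⟨i, hic, hnk, hcn⟩
end

section
/- Let A ∈ ℝ^{N×N}, let G ∈ ℝ^{N×N} be symmetric positive definite with GᵀA + AᵀG − 2GᵀG ≺ 0, let M ∈ ℝ^{η×η} be symmetric positive definite, let l_f ≥ 0, and let ω be a real number satisfying ω ≥ (1/λmin(M))·(1 + l_f·‖M ⊗ G‖/(λmin(M)·λmin(GᵀG))). Then (M ⊗ G)((I_η ⊗ A) − ω(M ⊗ G)) + l_f·‖M ⊗ G‖·I_{Nη} ≺ 0, i.e., xᵀ[(M ⊗ G)((I_η ⊗ A) − ω(M ⊗ G)) + l_f·‖M ⊗ G‖·I_{Nη}]x < 0 for every nonzero x ∈ ℝ^{Nη}. -/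
open Matrix
open scoped Kronecker

/-- Euclidean norm of a real vector. -/
noncomputable def eNorm {n : Type*} [Fintype n] (x : n → ℝ) : ℝ :=
  Real.sqrt (∑ i, x i ^ 2)

/-- Spectral (ℓ2 operator) norm of a real square matrix: the supremum of `‖Bx‖/‖x‖`. -/
noncomputable def opNorm {n : Type*} [Fintype n] (B : Matrix n n ℝ) : ℝ :=
  ⨆ x : n → ℝ, eNorm (B.mulVec x) / eNorm x

/-- Smallest real eigenvalue of a real square matrix. -/
noncomputable def lmin {n : Type*} [Fintype n] (M : Matrix n n ℝ) : ℝ :=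
  sInf {μ : ℝ | ∃ x : n → ℝ, x ≠ 0 ∧ M.mulVec x = μ • x}

/-- Largest real eigenvalue of a real square matrix. -/
noncomputable def lmax {n : Type*} [Fintype n] (M : Matrix n n ℝ) : ℝ :=
  sSup {μ : ℝ | ∃ x : n → ℝ, x ≠ 0 ∧ M.mulVec x = μ • x}

/-!
Write `K = M ⊗ G`, so that `K (I ⊗ A) = M ⊗ GA` and `K² = M² ⊗ G²`. The hypothesis on `A` says
`GA + (GA)ᵀ < 2G²`, and tensoring with `M > 0` gives `xᵀ(M ⊗ GA)x < xᵀ(M ⊗ G²)x`. In the Loewner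
order, `M² ≥ λmin(M) M` and `M ⊗ G² ≥ λmin(M) λmin(G²) I`, so the bound on `ω` yields
`ω K² ≥ (1 + l_f ‖K‖ / (λmin(M) λmin(G²))) (M ⊗ G²) ≥ M ⊗ G² + l_f ‖K‖ I`, and the two estimates
combine to the claim.
-/

theorem opNorm_nonneg {n : Type*} [Fintype n] (B : Matrix n n ℝ) : 0 ≤ opNorm B :=
  Real.iSup_nonneg fun _ => div_nonneg (Real.sqrt_nonneg _) (Real.sqrt_nonneg _)

open scoped MatrixOrder ComplexOrder

namespace Matrix

theorem setOf_exists_ne_zero_mulVec_eq_smul {K n : Type*} [Field K] [Fintype n] [DecidableEq n]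
    (A : Matrix n n K) :
    {μ : K | ∃ x : n → K, x ≠ 0 ∧ A *ᵥ x = μ • x} = spectrum K A := by
  ext μ
  rw [Set.mem_ofPred_eq, ← spectrum_toLin', ← Module.End.hasEigenvalue_iff_mem_spectrum]
  constructor
  · rintro ⟨x, hx, hAx⟩
    exact Module.End.hasEigenvalue_of_hasEigenvector
      ⟨by simpa [Module.End.mem_eigenspace_iff] using hAx, hx⟩
  · intro h
    obtain ⟨x, hx⟩ := h.exists_hasEigenvector
    exact ⟨x, hx.2, by simpa [Module.End.mem_eigenspace_iff] using hx.1⟩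

section Kronecker

variable {𝕜 m n : Type*} [RCLike 𝕜] [Fintype m] [Fintype n]

theorem kronecker_le_kronecker {A B : Matrix m m 𝕜} {C D : Matrix n n 𝕜}
    (hAB : A ≤ B) (hCD : C ≤ D) (hC : 0 ≤ C) (hB : 0 ≤ B) : A ⊗ₖ C ≤ B ⊗ₖ D := by
  have h : B ⊗ₖ D - A ⊗ₖ C = B ⊗ₖ (D - C) + (B - A) ⊗ₖ C := by
    ext ⟨i, j⟩ ⟨k, l⟩
    simp only [sub_apply, add_apply, kronecker_apply]
    ring
  rw [le_iff, h]
  exact (hB.posSemidef.kronecker (le_iff.mp hCD)).add ((le_iff.mp hAB).kronecker hC.posSemidef)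

theorem IsHermitian.smul_le_mul_self [DecidableEq n] {A : Matrix n n 𝕜} (hA : A.IsHermitian)
    {c : ℝ} (hc : 0 ≤ c) (h : c • (1 : Matrix n n 𝕜) ≤ A) : c • A ≤ A * A := by
  set D := A - c • (1 : Matrix n n 𝕜)
  have hD : Dᴴ = D := by simp [D, hA.eq]
  have key : A * A - c • A = Dᴴ * D + c • D := by
    rw [hD]
    simp only [D, sub_mul, mul_sub, Matrix.smul_mul, Matrix.mul_smul, Matrix.one_mul,
      Matrix.mul_one]
    module
  rw [le_iff, key]
  exact (posSemidef_conjTranspose_mul_self D).add ((le_iff.mp h).smul hc)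

theorem kronecker_add_smul_one_le [DecidableEq m] [DecidableEq n] {M : Matrix m m 𝕜}
    {H : Matrix n n 𝕜} (hM : M.IsHermitian) {μ ν c ω : ℝ} (hμ : 0 < μ) (hν : 0 < ν) (hc : 0 ≤ c)
    (hμM : μ • (1 : Matrix m m 𝕜) ≤ M) (hνH : ν • (1 : Matrix n n 𝕜) ≤ H)
    (hω : 1 / μ * (1 + c / (μ * ν)) ≤ ω) :
    M ⊗ₖ H + c • (1 : Matrix (m × n) (m × n) 𝕜) ≤ ω • ((M * M) ⊗ₖ H) := by
  have hM0 : 0 ≤ M := (smul_nonneg hμ.le zero_le_one).trans hμM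
  have hH0 : 0 ≤ H := (smul_nonneg hν.le zero_le_one).trans hνH
  have hP0 : 0 ≤ M ⊗ₖ H := (hM0.posSemidef.kronecker hH0.posSemidef).nonneg
  have hμν : 0 < μ * ν := mul_pos hμ hν
  have hωμ : 1 + c / (μ * ν) ≤ ω * μ := by
    rwa [one_div_mul_eq_div, div_le_iff₀ hμ] at hω
  have hω0 : 0 ≤ ω := le_trans (by positivity) hω
  have hlower : (μ * ν) • (1 : Matrix (m × n) (m × n) 𝕜) ≤ M ⊗ₖ H := by
    have h := kronecker_le_kronecker hμM hνH (smul_nonneg hν.le zero_le_one) hM0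
    rwa [smul_kronecker, kronecker_smul, one_kronecker_one, smul_smul] at h
  have hsquare : μ • (M ⊗ₖ H) ≤ (M * M) ⊗ₖ H := by
    have hMM := hM.smul_le_mul_self hμ.le hμM
    rw [← smul_kronecker]
    exact kronecker_le_kronecker hMM le_rfl hH0 ((smul_nonneg hμ.le hM0).trans hMM)
  calc M ⊗ₖ H + c • (1 : Matrix (m × n) (m × n) 𝕜)
      = M ⊗ₖ H + (c / (μ * ν)) • ((μ * ν) • (1 : Matrix (m × n) (m × n) 𝕜)) := by
        rw [smul_smul, div_mul_cancel₀ c hμν.ne']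
    _ ≤ M ⊗ₖ H + (c / (μ * ν)) • (M ⊗ₖ H) := by gcongr
    _ = (1 + c / (μ * ν)) • (M ⊗ₖ H) := by module
    _ ≤ (ω * μ) • (M ⊗ₖ H) := smul_le_smul_of_nonneg_right hωμ hP0
    _ = ω • (μ • (M ⊗ₖ H)) := (smul_smul ω μ _).symm
    _ ≤ ω • ((M * M) ⊗ₖ H) := smul_le_smul_of_nonneg_left hsquare hω0

end Kronecker

section QuadraticForm

variable {m n : Type*} [Fintype m] [Fintype n]

theorem dotProduct_mulVec_le_dotProduct_mulVec {A B : Matrix n n ℝ} (h : A ≤ B) (x : n → ℝ) :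
    x ⬝ᵥ A *ᵥ x ≤ x ⬝ᵥ B *ᵥ x := by
  have := (le_iff.mp h).dotProduct_mulVec_nonneg x
  rw [star_trivial, sub_mulVec, dotProduct_sub] at this
  linarith

theorem dotProduct_mulVec_kronecker_lt {M : Matrix m m ℝ} (hM : M.PosDef)
    {B S : Matrix n n ℝ} (hS : Sᵀ = S)
    (hBS : ∀ y : n → ℝ, y ≠ 0 → y ⬝ᵥ (B + Bᵀ - (2 : ℝ) • S) *ᵥ y < 0)
    {x : m × n → ℝ} (hx : x ≠ 0) : x ⬝ᵥ (M ⊗ₖ B) *ᵥ x < x ⬝ᵥ (M ⊗ₖ S) *ᵥ x := by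
  set T := (2 : ℝ) • S - (B + Bᵀ)
  have hT : T.PosDef := by
    refine .of_dotProduct_mulVec_pos ?_ fun y hy => ?_
    · rw [IsHermitian, conjTranspose_eq_transpose_of_trivial]
      simp only [T, transpose_sub, transpose_smul, transpose_add, transpose_transpose, hS]
      abel
    · have := hBS y hy
      rw [star_trivial, show T = -(B + Bᵀ - (2 : ℝ) • S) from (neg_sub _ _).symm, neg_mulVec,
        dotProduct_neg]
      linarith
  have hMT := (hM.kronecker hT).dotProduct_mulVec_pos hx
  have hsplit : M ⊗ₖ T = (2 : ℝ) • (M ⊗ₖ S) - (M ⊗ₖ B + (M ⊗ₖ B)ᵀ) := by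
    rw [← kroneckerMap_transpose, ← conjTranspose_eq_transpose_of_trivial M, hM.1.eq]
    ext ⟨i, j⟩ ⟨k, l⟩
    simp only [T, sub_apply, add_apply, smul_apply, kronecker_apply, smul_eq_mul]
    ring
  rw [star_trivial, hsplit, sub_mulVec, add_mulVec, smul_mulVec, dotProduct_sub, dotProduct_add,
    dotProduct_smul, dotProduct_transpose_mulVec, smul_eq_mul] at hMT
  linarith

end QuadraticForm

section Lmin

variable {n : Type*} [Fintype n] [DecidableEq n]

theorem lmin_eq_sInf_spectrum (A : Matrix n n ℝ) : lmin A = sInf (spectrum ℝ A) :=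
  congrArg sInf (setOf_exists_ne_zero_mulVec_eq_smul A)

theorem IsHermitian.lmin_smul_one_le {A : Matrix n n ℝ} (hA : A.IsHermitian) :
    lmin A • (1 : Matrix n n ℝ) ≤ A := by
  rw [← Algebra.algebraMap_eq_smul_one]
  refine algebraMap_le_of_le_spectrum (fun x hx => ?_) hA
  rw [lmin_eq_sInf_spectrum, hA.spectrum_real_eq_range_eigenvalues] at *
  exact csInf_le (Set.finite_range _).bddBelow hx

theorem PosDef.lmin_pos [Nonempty n] {A : Matrix n n ℝ} (hA : A.PosDef) : 0 < lmin A := by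
  rw [lmin_eq_sInf_spectrum, hA.1.spectrum_real_eq_range_eigenvalues]
  obtain ⟨i, hi⟩ := (Set.range_nonempty hA.1.eigenvalues).csInf_mem (Set.finite_range _)
  exact hi ▸ hA.eigenvalues_pos i

end Lmin

end Matrix

/-- Lemma on the tuning of `ω` and `G`: under `GᵀA + AᵀG − 2GᵀG ≺ 0` and the lower bound
on `ω`, the matrix `(M ⊗ G)((I ⊗ A) − ω (M ⊗ G)) + l_f ‖M ⊗ G‖ I` is negative definite. -/
theorem stmt5 {N η : ℕ} (A G : Matrix (Fin N) (Fin N) ℝ)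
    (hG : G.PosDef)
    (hGA : ∀ x : Fin N → ℝ, x ≠ 0 →
      x ⬝ᵥ (Gᵀ * A + Aᵀ * G - (2 : ℝ) • (Gᵀ * G)).mulVec x < 0)
    (M : Matrix (Fin η) (Fin η) ℝ) (hM : M.PosDef)
    (lf : ℝ) (hlf : 0 ≤ lf) (ω : ℝ)
    (hω : (1 / lmin M) * (1 + lf * opNorm (M ⊗ₖ G) / (lmin M * lmin (Gᵀ * G))) ≤ ω) :
    ∀ x : Fin η × Fin N → ℝ, x ≠ 0 →
      x ⬝ᵥ ((M ⊗ₖ G) * (((1 : Matrix (Fin η) (Fin η) ℝ) ⊗ₖ A) - ω • (M ⊗ₖ G))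
            + (lf * opNorm (M ⊗ₖ G)) • (1 : Matrix (Fin η × Fin N) (Fin η × Fin N) ℝ)).mulVec x
        < 0 := by
  intro x hx
  obtain ⟨⟨i, j⟩, -⟩ := Function.ne_iff.mp hx
  have : Nonempty (Fin η) := ⟨i⟩
  have : Nonempty (Fin N) := ⟨j⟩
  have hGT : Gᵀ = G := by rw [← conjTranspose_eq_transpose_of_trivial]; exact hG.1
  have hGG : (Gᵀ * G).PosDef := by
    rw [← conjTranspose_eq_transpose_of_trivial]
    exact .conjTranspose_mul_self G (mulVec_injective_iff_isUnit.mpr hG.isUnit)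
  rw [hGT] at hGA hGG hω
  have hdom := kronecker_add_smul_one_le hM.1 hM.lmin_pos hGG.lmin_pos
    (mul_nonneg hlf (opNorm_nonneg _)) hM.1.lmin_smul_one_le hGG.1.lmin_smul_one_le hω
  have hlt := dotProduct_mulVec_kronecker_lt hM (B := G * A) (S := G * G)
    (by rw [transpose_mul, hGT]) (by rwa [transpose_mul, hGT]) hx
  have hexpand : (M ⊗ₖ G) * ((1 : Matrix (Fin η) (Fin η) ℝ) ⊗ₖ A - ω • (M ⊗ₖ G))
        + (lf * opNorm (M ⊗ₖ G)) • (1 : Matrix (Fin η × Fin N) (Fin η × Fin N) ℝ)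
      = M ⊗ₖ (G * A) - (ω • ((M * M) ⊗ₖ (G * G))
        - (lf * opNorm (M ⊗ₖ G)) • (1 : Matrix (Fin η × Fin N) (Fin η × Fin N) ℝ)) := by
    rw [Matrix.mul_sub, Matrix.mul_smul, ← mul_kronecker_mul, ← mul_kronecker_mul, Matrix.mul_one]
    abel
  have hquad := dotProduct_mulVec_le_dotProduct_mulVec (le_sub_iff_add_le.mpr hdom) x
  rw [hexpand, sub_mulVec, dotProduct_sub]
  linarith
end

section
/- Let P ∈ ℝ^{m×m} be symmetric positive definite, let φ > 0, and let x : [0, ∞) → ℝ^m be differentiable with the property that the function V(t) = (1/2)·x(t)ᵀP·x(t) satisfies V′(t) ≤ −φ·‖x(t)‖ for all t > 0. Then x(t) = 0 for every t ≥ (λmax(P)/φ)·‖x(0)‖. -/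
/-! With `Q(s) = x(s)ᵀ P x(s)` and `λ = λmax(P)`, the Rayleigh bound `Q ≤ λ ‖x‖²` turns the hypothesis
into `Q' ≤ -(2φ/√λ) √Q`. Hence `√Q` decreases at rate at least `φ/√λ` as long as it is positive, so it
vanishes by time `√(Q 0) · √λ / φ ≤ λ ‖x(0)‖ / φ`. -/

open Matrix

open Set
open scoped MatrixOrder

theorem eNorm_eq_sqrt_dotProduct {n : Type*} [Fintype n] (v : n → ℝ) : eNorm v = √(v ⬝ᵥ v) := by
  simp only [eNorm, dotProduct, sq]

theorem DifferentiableAt.dotProduct_mulVec {n : Type*} [Fintype n] {x : ℝ → n → ℝ} {t : ℝ}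
    (hx : DifferentiableAt ℝ x t) (A : Matrix n n ℝ) :
    DifferentiableAt ℝ (fun s => x s ⬝ᵥ A *ᵥ x s) t := by
  have := differentiableAt_pi.mp hx
  simp only [dotProduct, mulVec]
  fun_prop

namespace Matrix

variable {n : Type*} [Fintype n] [DecidableEq n]

theorem mem_spectrum_iff_exists_mulVec_eq_smul {K : Type*} [Field K] {A : Matrix n n K} {μ : K} :
    μ ∈ spectrum K A ↔ ∃ v ≠ 0, A *ᵥ v = μ • v := by
  rw [← spectrum_toLin', ← Module.End.hasEigenvalue_iff_mem_spectrum]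
  constructor
  · intro h
    obtain ⟨v, hv⟩ := h.exists_hasEigenvector
    exact ⟨v, hv.2, Module.End.mem_eigenspace_iff.mp hv.1⟩
  · rintro ⟨v, hv0, hv⟩
    exact Module.End.hasEigenvalue_of_hasEigenvector ⟨Module.End.mem_eigenspace_iff.mpr hv, hv0⟩

theorem lmax_eq_sSup_spectrum (A : Matrix n n ℝ) : lmax A = sSup (spectrum ℝ A) := by
  rw [lmax]
  congr 1
  ext μ
  exact mem_spectrum_iff_exists_mulVec_eq_smul.symm

variable {A : Matrix n n ℝ}

theorem le_lmax_of_mem_spectrum {μ : ℝ} (hμ : μ ∈ spectrum ℝ A) : μ ≤ lmax A :=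
  lmax_eq_sSup_spectrum A ▸ le_csSup A.finite_real_spectrum.bddAbove hμ

theorem IsHermitian.dotProduct_mulVec_le (hA : A.IsHermitian) (v : n → ℝ) :
    v ⬝ᵥ A *ᵥ v ≤ lmax A * (v ⬝ᵥ v) := by
  have hle : A ≤ algebraMap ℝ _ (lmax A) :=
    le_algebraMap_of_spectrum_le (fun _ hμ => le_lmax_of_mem_spectrum hμ) hA.isSelfAdjoint
  have := (le_iff.mp hle).dotProduct_mulVec_nonneg v
  simp only [star_trivial, Algebra.algebraMap_eq_smul_one, sub_mulVec, smul_mulVec, one_mulVec,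
    dotProduct_sub, dotProduct_smul, smul_eq_mul, sub_nonneg] at this
  linarith

theorem IsHermitian.sqrt_dotProduct_mulVec_le (hA : A.IsHermitian) (v : n → ℝ) :
    √(v ⬝ᵥ A *ᵥ v) ≤ √(lmax A) * eNorm v := by
  rw [eNorm_eq_sqrt_dotProduct, ← Real.sqrt_mul' _ (by simpa using dotProduct_self_star_nonneg v)]
  exact Real.sqrt_le_sqrt (hA.dotProduct_mulVec_le v)

theorem PosDef.lmax_pos [Nonempty n] (hA : A.PosDef) : 0 < lmax A := by
  let i := Classical.arbitrary n
  exact (hA.eigenvalues_pos i).trans_le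
    (le_lmax_of_mem_spectrum (hA.isHermitian.eigenvalues_mem_spectrum_real i))

end Matrix

theorem nonpos_of_deriv_le_neg_mul_sqrt {V : ℝ → ℝ} {c t : ℝ} (hc : 0 ≤ c)
    (hcont : ContinuousOn V (Ici 0)) (hdiff : DifferentiableOn ℝ V (Ioi 0))
    (hV' : ∀ s, 0 < s → deriv V s ≤ -c * √(V s)) (ht : 0 ≤ t) (hT : 2 * √(V 0) ≤ c * t) :
    V t ≤ 0 := by
  by_contra! hVt
  have hanti : AntitoneOn V (Ici 0) := by
    refine antitoneOn_of_deriv_nonpos (convex_Ici 0) hcont (by rwa [interior_Ici]) fun s hs => ?_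
    rw [interior_Ici] at hs
    exact (hV' s hs).trans (by nlinarith [Real.sqrt_nonneg (V s)])
  have hpos : ∀ s ∈ Icc 0 t, 0 < V s := fun s hs => hVt.trans_le (hanti hs.1 ht hs.2)
  have hsqrt : √(V t) - √(V 0) ≤ -(c / 2) * (t - 0) := by
    refine (convex_Icc 0 t).image_sub_le_mul_sub_of_deriv_le
      (hcont.mono Icc_subset_Ici_self).sqrt ?_ ?_ 0 (left_mem_Icc.2 ht) t (right_mem_Icc.2 ht) ht
    · rw [interior_Icc]
      exact fun s hs => ((hdiff.differentiableAt (Ioi_mem_nhds hs.1)).sqrt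
        (hpos s (Ioo_subset_Icc_self hs)).ne').differentiableWithinAt
    · rw [interior_Icc]
      intro s hs
      have hVs := hpos s (Ioo_subset_Icc_self hs)
      rw [((hdiff.differentiableAt (Ioi_mem_nhds hs.1)).hasDerivAt.sqrt hVs.ne').deriv,
        div_le_iff₀ (by positivity)]
      linarith [hV' s hs.1]
  linarith [Real.sqrt_pos.2 hVt]

theorem Matrix.IsHermitian.deriv_dotProduct_mulVec_le {n : Type*} [Fintype n] [DecidableEq n]
    {A : Matrix n n ℝ} (hA : A.IsHermitian) (hL : 0 < lmax A) {x : ℝ → n → ℝ} {φ s : ℝ}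
    (hφ : 0 ≤ φ) (hx : DifferentiableAt ℝ x s)
    (hV : deriv (fun s => 1 / 2 * (x s ⬝ᵥ A *ᵥ x s)) s ≤ -φ * eNorm (x s)) :
    deriv (fun s => x s ⬝ᵥ A *ᵥ x s) s ≤ -(2 * φ / √(lmax A)) * √(x s ⬝ᵥ A *ᵥ x s) := by
  have hQV : deriv (fun s => x s ⬝ᵥ A *ᵥ x s) s =
      2 * deriv (fun s => 1 / 2 * (x s ⬝ᵥ A *ᵥ x s)) s := by
    rw [deriv_const_mul _ (hx.dotProduct_mulVec A)]; ring
  have hcQ : 2 * φ / √(lmax A) * √(x s ⬝ᵥ A *ᵥ x s) ≤ 2 * φ * eNorm (x s) := calc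
    _ ≤ 2 * φ / √(lmax A) * (√(lmax A) * eNorm (x s)) := by
      gcongr; exact hA.sqrt_dotProduct_mulVec_le (x s)
    _ = 2 * φ * eNorm (x s) := by field_simp [(Real.sqrt_pos.2 hL).ne']
  linarith

/-- Finite-time convergence estimate: if `V(t) = (1/2) x(t)ᵀ P x(t)` decreases at rate
`V' ≤ −φ ‖x‖` with `P` symmetric positive definite, then `x(t) = 0` for all
`t ≥ (λmax(P)/φ) ‖x(0)‖`. -/
theorem stmt14 {m : ℕ} (P : Matrix (Fin m) (Fin m) ℝ) (hP : P.PosDef)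
    (φ : ℝ) (hφ : 0 < φ) (x : ℝ → Fin m → ℝ)
    (hx : ∀ t, 0 ≤ t → DifferentiableAt ℝ x t)
    (hV : ∀ t, 0 < t →
      deriv (fun s => (1 / 2 : ℝ) * (x s ⬝ᵥ P.mulVec (x s))) t ≤ -φ * eNorm (x t)) :
    ∀ t, (lmax P / φ) * eNorm (x 0) ≤ t → x t = 0 := by
  rcases isEmpty_or_nonempty (Fin m) with _ | _
  · exact fun t _ => Subsingleton.elim _ _
  have hL := hP.lmax_pos
  have hQd (s : ℝ) (hs : 0 ≤ s) := (hx s hs).dotProduct_mulVec P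
  intro t ht
  have ht0 : 0 ≤ t := (mul_nonneg (div_pos hL hφ).le (Real.sqrt_nonneg _)).trans ht
  have hT : 2 * √(x 0 ⬝ᵥ P *ᵥ x 0) ≤ 2 * φ / √(lmax P) * t := calc
    _ ≤ 2 * (√(lmax P) * eNorm (x 0)) := by
      gcongr; exact hP.isHermitian.sqrt_dotProduct_mulVec_le (x 0)
    _ = 2 * φ / √(lmax P) * (lmax P / φ * eNorm (x 0)) := by
      field_simp [(Real.sqrt_pos.2 hL).ne']
      rw [Real.sq_sqrt hL.le, mul_comm]
    _ ≤ 2 * φ / √(lmax P) * t := by gcongr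
  have hQt := nonpos_of_deriv_le_neg_mul_sqrt (by positivity)
    (fun s hs => (hQd s hs).continuousAt.continuousWithinAt)
    (fun s hs => (hQd s hs.le).differentiableWithinAt)
    (fun s hs => hP.isHermitian.deriv_dotProduct_mulVec_le hL hφ.le (hx s hs.le) (hV s hs)) ht0 hT
  by_contra hxt
  exact (hP.dotProduct_mulVec_pos hxt).not_ge (by simpa using hQt)
end

section
/- Let L ∈ ℝ^{n×n} be symmetric with L·𝟙 = 0 (where 𝟙 is the all-ones vector), and suppose there is λ₂ > 0 such that wᵀLw ≥ λ₂·‖w‖² for every w ∈ ℝⁿ orthogonal to 𝟙. Let Π = I_n − (1/n)·𝟙𝟙ᵀ be the orthogonal projection onto the orthogonal complement of 𝟙, let v : [0, ∞) → ℝⁿ be continuous and bounded, and let x : [0, ∞) → ℝⁿ be differentiable with x′(t) = −L·x(t) − v(t) for all t ≥ 0. Then for all t ≥ 0: ‖Π·x(t)‖ ≤ e^{−λ₂·t}·‖Π·x(0)‖ + (1/λ₂)·sup_{0 ≤ τ ≤ t} ‖v(τ)‖. -/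
/-!
Since `L 𝟙 = 0`, the disagreement vector `y = Π x` satisfies
`⟪y, y'⟫ = -yᵀ L y - ⟪y, v⟫ ≤ -λ₂ ‖y‖² + ‖y‖ · sup ‖v‖` by the spectral gap and Cauchy–Schwarz.
Grönwall's inequality, applied to the smoothed norm `√(‖y‖² + δ²)` (differentiable even where
`y` vanishes), turns this into the estimate up to an error `O(δ)`, and then `δ → 0`.
-/

open Matrix

/-- Projection onto the orthogonal complement of the all-ones vector:
`Π x = x − (1/n) 𝟙 𝟙ᵀ x`. -/
noncomputable def consProj {n : ℕ} (x : Fin n → ℝ) : Fin n → ℝ :=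
  fun i => x i - (∑ l, x l) / n

open Set Real

section eNorm

variable {ι : Type*} [Fintype ι]

theorem eNorm_nonneg (x : ι → ℝ) : 0 ≤ eNorm x := sqrt_nonneg _

theorem eNorm_sq (x : ι → ℝ) : eNorm x ^ 2 = ∑ i, x i ^ 2 :=
  sq_sqrt (by positivity)

theorem eNorm_neg (x : ι → ℝ) : eNorm (-x) = eNorm x := by
  simp only [eNorm, Pi.neg_apply, neg_sq]

theorem dotProduct_le_eNorm_mul_eNorm (x y : ι → ℝ) : x ⬝ᵥ y ≤ eNorm x * eNorm y :=
  sum_mul_le_sqrt_mul_sqrt _ x y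

theorem neg_dotProduct_le_eNorm_mul_eNorm (x y : ι → ℝ) : -(x ⬝ᵥ y) ≤ eNorm x * eNorm y := by
  simpa only [dotProduct_neg, eNorm_neg] using dotProduct_le_eNorm_mul_eNorm x (-y)

theorem HasDerivAt.eNorm_sq {y : ℝ → ι → ℝ} {y' : ι → ℝ} {t : ℝ} (h : HasDerivAt y y' t) :
    HasDerivAt (fun s => eNorm (y s) ^ 2) (2 * (y t ⬝ᵥ y')) t := by
  simp only [_root_.eNorm_sq, dotProduct, Finset.mul_sum]
  exact HasDerivAt.fun_sum fun i _ =>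
    ((hasDerivAt_pi.1 h i).fun_pow 2).congr_deriv (by push_cast; ring)

end eNorm

section consProj

variable {n : ℕ}

theorem consProj_eq_sub_smul (x : Fin n → ℝ) :
    consProj x = x - ((∑ l, x l) / n) • fun _ => (1 : ℝ) := by
  ext i
  simp [consProj]

theorem consProj_dotProduct_one (x : Fin n → ℝ) : consProj x ⬝ᵥ (fun _ => 1) = 0 := by
  rcases Nat.eq_zero_or_pos n with rfl | hn
  · simp
  · simp only [dotProduct, mul_one, consProj, Finset.sum_sub_distrib, Finset.sum_const,
      Finset.card_univ, Fintype.card_fin, nsmul_eq_mul]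
    rw [mul_div_cancel₀ _ (by positivity), sub_self]

theorem dotProduct_consProj {w : Fin n → ℝ} (hw : w ⬝ᵥ (fun _ => 1) = 0) (x : Fin n → ℝ) :
    w ⬝ᵥ consProj x = w ⬝ᵥ x := by
  rw [consProj_eq_sub_smul, dotProduct_sub, dotProduct_smul, hw, smul_zero, sub_zero]

theorem mulVec_consProj {L : Matrix (Fin n) (Fin n) ℝ} (hL1 : L *ᵥ (fun _ => 1) = 0)
    (x : Fin n → ℝ) : L *ᵥ consProj x = L *ᵥ x := by
  rw [consProj_eq_sub_smul, mulVec_sub, mulVec_smul, hL1, smul_zero, sub_zero]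

theorem HasDerivAt.consProj {x : ℝ → Fin n → ℝ} {x' : Fin n → ℝ} {t : ℝ}
    (h : HasDerivAt x x' t) : HasDerivAt (fun s => consProj (x s)) (consProj x') t := by
  simp only [consProj_eq_sub_smul]
  exact h.sub (((HasDerivAt.fun_sum fun i _ => hasDerivAt_pi.1 h i).div_const _).smul_const _)

end consProj

theorem gronwallBound_neg_le {δ lam ε : ℝ} (x : ℝ) (hlam : 0 < lam) (hε : 0 ≤ ε) :
    gronwallBound δ (-lam) ε x ≤ δ * exp (-lam * x) + ε / lam := by
  rw [gronwallBound_of_K_ne_0 (neg_ne_zero.2 hlam.ne'), div_neg]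
  nlinarith [exp_pos (-lam * x), div_nonneg hε hlam.le]

section Dissipative

variable {u V' : ℝ → ℝ} {lam M a b : ℝ}

theorem sqrt_sq_add_sq_le_of_hasDerivAt_sq (hlam : 0 < lam) (hM : 0 ≤ M) (hab : a ≤ b)
    (hu : ∀ t ∈ Icc a b, HasDerivAt (fun s => u s ^ 2) (V' t) t)
    (hV' : ∀ t ∈ Ico a b, V' t ≤ -2 * lam * u t ^ 2 + 2 * M * u t) {δ : ℝ} (hδ : 0 < δ) :
    √(u b ^ 2 + δ ^ 2) ≤ √(u a ^ 2 + δ ^ 2) * exp (-lam * (b - a)) + (M + lam * δ) / lam := by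
  set g : ℝ → ℝ := fun t => √(u t ^ 2 + δ ^ 2)
  have hg_pos : ∀ t, 0 < g t := fun t => sqrt_pos.2 (by positivity)
  have hg : ∀ t ∈ Icc a b, HasDerivAt g (V' t / (2 * g t)) t := fun t ht =>
    ((hu t ht).add_const _).sqrt (by positivity)
  have hg_bound : ∀ t ∈ Ico a b, V' t / (2 * g t) ≤ -lam * g t + (M + lam * δ) := by
    intro t ht
    have hg_sq : g t ^ 2 = u t ^ 2 + δ ^ 2 := sq_sqrt (by positivity)
    have hu_le : u t ≤ g t := le_sqrt_of_sq_le (by linarith [sq_nonneg δ])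
    have hδ_le : δ ≤ g t := le_sqrt_of_sq_le (by linarith [sq_nonneg (u t)])
    rw [div_le_iff₀ (by linarith [hg_pos t])]
    nlinarith [hV' t ht, mul_le_mul_of_nonneg_left hu_le hM,
      mul_le_mul_of_nonneg_left hδ_le (mul_nonneg hlam.le hδ.le)]
  have := le_gronwallBound_of_liminf_deriv_right_le (f := g) (K := -lam) (ε := M + lam * δ)
    (fun t ht => (hg t ht).continuousAt.continuousWithinAt)
    (fun t ht _ hr => (hg t (Ico_subset_Icc_self ht)).hasDerivWithinAt.liminf_right_slope_le hr)
    le_rfl hg_bound b ⟨hab, le_rfl⟩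
  exact this.trans (gronwallBound_neg_le _ hlam (by positivity))

theorem le_exp_mul_abs_add_div_of_hasDerivAt_sq (hlam : 0 < lam) (hM : 0 ≤ M) (hab : a ≤ b)
    (hu : ∀ t ∈ Icc a b, HasDerivAt (fun s => u s ^ 2) (V' t) t)
    (hV' : ∀ t ∈ Ico a b, V' t ≤ -2 * lam * u t ^ 2 + 2 * M * u t) :
    u b ≤ exp (-lam * (b - a)) * |u a| + M / lam := by
  refine le_of_forall_pos_le_add fun ε hε => ?_
  have hδ : 0 < ε / 2 := half_pos hε
  have hsmooth := sqrt_sq_add_sq_le_of_hasDerivAt_sq hlam hM hab hu hV' hδ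
  have hb : u b ≤ √(u b ^ 2 + (ε / 2) ^ 2) :=
    le_sqrt_of_sq_le (by linarith [sq_nonneg (ε / 2)])
  have ha : √(u a ^ 2 + (ε / 2) ^ 2) ≤ |u a| + ε / 2 :=
    sqrt_le_iff.2 ⟨by positivity, by nlinarith [sq_abs (u a), abs_nonneg (u a)]⟩
  have hexp : exp (-lam * (b - a)) ≤ 1 := exp_le_one_iff.2 (by nlinarith)
  have hexp0 := exp_pos (-lam * (b - a))
  calc u b ≤ (|u a| + ε / 2) * exp (-lam * (b - a)) + (M + lam * (ε / 2)) / lam :=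
        hb.trans (hsmooth.trans (by gcongr))
    _ ≤ exp (-lam * (b - a)) * |u a| + M / lam + ε := by
        rw [add_div, mul_div_cancel_left₀ _ hlam.ne']
        nlinarith

end Dissipative

theorem consProj_dotProduct_consProj_neg_mulVec_sub_le {n : ℕ} {L : Matrix (Fin n) (Fin n) ℝ}
    (hL1 : L *ᵥ (fun _ => 1) = 0) {lam : ℝ}
    (hgap : ∀ w : Fin n → ℝ, w ⬝ᵥ (fun _ => (1 : ℝ)) = 0 → lam * eNorm w ^ 2 ≤ w ⬝ᵥ L *ᵥ w)
    (x d : Fin n → ℝ) :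
    consProj x ⬝ᵥ consProj (-(L *ᵥ x) - d) ≤
      -lam * eNorm (consProj x) ^ 2 + eNorm (consProj x) * eNorm d := by
  have hy := consProj_dotProduct_one x
  rw [dotProduct_consProj hy, dotProduct_sub, dotProduct_neg, ← mulVec_consProj hL1 x]
  linarith [hgap _ hy, neg_dotProduct_le_eNorm_mul_eNorm (consProj x) d]

theorem stmt15_general {n : ℕ} (L : Matrix (Fin n) (Fin n) ℝ)
    (hL1 : L.mulVec (fun _ => 1) = 0)
    (lam2 : ℝ) (hlam2 : 0 < lam2)
    (hgap : ∀ w : Fin n → ℝ, w ⬝ᵥ (fun _ => (1 : ℝ)) = 0 →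
      lam2 * eNorm w ^ 2 ≤ w ⬝ᵥ L.mulVec w)
    (v : ℝ → Fin n → ℝ)
    (hvbdd : ∃ C, ∀ t, 0 ≤ t → eNorm (v t) ≤ C)
    (x : ℝ → Fin n → ℝ)
    (hx : ∀ t, 0 ≤ t → HasDerivAt x (-(L.mulVec (x t)) - v t) t) :
    ∀ t, 0 ≤ t →
      eNorm (consProj (x t)) ≤
        Real.exp (-lam2 * t) * eNorm (consProj (x 0))
          + (1 / lam2) * ⨆ τ : Set.Icc (0 : ℝ) t, eNorm (v τ) := by
  intro T hT
  obtain ⟨C, hC⟩ := hvbdd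
  set M := ⨆ τ : Icc (0 : ℝ) T, eNorm (v τ)
  have hvM : ∀ τ ∈ Icc 0 T, eNorm (v τ) ≤ M := fun τ hτ =>
    le_ciSup (f := fun τ : Icc (0 : ℝ) T => eNorm (v τ))
      ⟨C, by rintro _ ⟨τ, rfl⟩; exact hC τ τ.2.1⟩ ⟨τ, hτ⟩
  have hM : 0 ≤ M := (eNorm_nonneg _).trans (hvM 0 ⟨le_rfl, hT⟩)
  have key := le_exp_mul_abs_add_div_of_hasDerivAt_sq (u := fun t => eNorm (consProj (x t)))
    hlam2 hM hT (fun t ht => (hx t ht.1).consProj.eNorm_sq) fun t ht => by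
      have := consProj_dotProduct_consProj_neg_mulVec_sub_le hL1 hgap (x t) (v t)
      nlinarith [hvM t (Ico_subset_Icc_self ht), eNorm_nonneg (consProj (x t))]
  rwa [sub_zero, abs_of_nonneg (eNorm_nonneg _), ← one_div_mul_eq_div] at key

/-- Set-ISS estimate for consensus dynamics `x' = −Lx − v` driven by a bounded disturbance:
`‖Πx(t)‖ ≤ e^{−λ₂ t} ‖Πx(0)‖ + (1/λ₂) sup_{0 ≤ τ ≤ t} ‖v(τ)‖`. -/
theorem stmt15 {n : ℕ} (L : Matrix (Fin n) (Fin n) ℝ)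
    (hLsymm : L.IsSymm) (hL1 : L.mulVec (fun _ => 1) = 0)
    (lam2 : ℝ) (hlam2 : 0 < lam2)
    (hgap : ∀ w : Fin n → ℝ, w ⬝ᵥ (fun _ => (1 : ℝ)) = 0 →
      lam2 * eNorm w ^ 2 ≤ w ⬝ᵥ L.mulVec w)
    (v : ℝ → Fin n → ℝ) (hvcont : ContinuousOn v (Set.Ici 0))
    (hvbdd : ∃ C, ∀ t, 0 ≤ t → eNorm (v t) ≤ C)
    (x : ℝ → Fin n → ℝ)
    (hx : ∀ t, 0 ≤ t → HasDerivAt x (-(L.mulVec (x t)) - v t) t) :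
    ∀ t, 0 ≤ t →
      eNorm (consProj (x t)) ≤
        Real.exp (-lam2 * t) * eNorm (consProj (x 0))
          + (1 / lam2) * ⨆ τ : Set.Icc (0 : ℝ) t, eNorm (v τ) :=
  stmt15_general L hL1 lam2 hlam2 hgap v hvbdd x hx
end
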